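/- Let S be a Hausdorff semitopological semigroup and let I be a compact two-sided ideal of S. Then the Rees quotient semigroup S/I (the quotient of S by the congruence identifying all elements of I with each other), equipped with the quotient topology, is a Hausdorff semitopological semigroup. -/
import Mathlib


/-- The Rees congruence associated with a subset `I` of `S`:
`x ~ y ↔ x = y ∨ (x ∈ I ∧ y ∈ I)`. -/
def reesSetoid {S : Type*} (I : Set S) : Setoid S where
  r x y := x = y ∨ (x ∈ I ∧ y ∈ I)
  iseqv := by
    constructor
    · intro x; exact Or.inl rfl
    · rintro x y (rfl | ⟨hx, hy⟩)
      · exact Or.inl rfl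
      · exact Or.inr ⟨hy, hx⟩
    · rintro x y z (rfl | ⟨hx, hy⟩) (rfl | ⟨hy', hz⟩)
      · exact Or.inl rfl
      · exact Or.inr ⟨hy', hz⟩
      · exact Or.inr ⟨hx, hy⟩
      · exact Or.inr ⟨hx, hz⟩

/-- The Rees quotient `S/I` (as a type). -/
abbrev ReesQuotient {S : Type*} (I : Set S) : Type _ := Quotient (reesSetoid I)
/-- If `S` is a Hausdorff semitopological semigroup and `I` is a compact two-sided
ideal of `S`, then the Rees quotient `S/I` with the quotient topology is a
Hausdorff semitopological semigroup (for the induced multiplication `m`). -/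
theorem reesQuotient_T2_semitopological
    {S : Type*} [Semigroup S] [TopologicalSpace S] [T2Space S]
    (hl : ∀ a : S, Continuous fun x : S => a * x)
    (hr : ∀ a : S, Continuous fun x : S => x * a)
    (I : Set S) (hne : I.Nonempty) (hIc : IsCompact I)
    (hideal : ∀ s : S, ∀ i ∈ I, s * i ∈ I ∧ i * s ∈ I)
    (m : ReesQuotient I → ReesQuotient I → ReesQuotient I)
    (hm : ∀ x y : S,
      m (Quotient.mk (reesSetoid I) x) (Quotient.mk (reesSetoid I) y)
        = Quotient.mk (reesSetoid I) (x * y)) :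
    T2Space (ReesQuotient I) ∧
    (∀ a : ReesQuotient I, Continuous fun x : ReesQuotient I => m a x) ∧
    (∀ a : ReesQuotient I, Continuous fun x : ReesQuotient I => m x a) := by
  classical
  set π : S → ReesQuotient I := Quotient.mk (reesSetoid I) with hπ
  have hIcl : IsClosed I := hIc.isClosed
  -- saturated open sets give open sets in the quotient
  have hsat : ∀ (U : Set S), (I ∩ U = ∅ ∨ I ⊆ U) → π ⁻¹' (π '' U) = U := by
    intro U hU
    ext z
    constructor
    · rintro ⟨x, hx, hxz⟩
      rcases Quotient.exact hxz with rfl | ⟨hxI, hzI⟩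
      · exact hx
      · rcases hU with h0 | h1
        · exact absurd (Set.mem_inter hxI hx) (by simp [h0])
        · exact h1 hzI
    · intro hz; exact ⟨z, hz, rfl⟩
  have hopen : ∀ (U : Set S), IsOpen U → (I ∩ U = ∅ ∨ I ⊆ U) → IsOpen (π '' U) := by
    intro U hUo hU
    rw [isOpen_coinduced (f := π)] at *
    · rwa [hsat U hU]
  refine ⟨?_, ?_, ?_⟩
  · -- Hausdorff
    refine ⟨fun a b hab => ?_⟩
    induction a using Quotient.inductionOn with | h x =>
    induction b using Quotient.inductionOn with | h y =>
    have hnr : ¬ (reesSetoid I).r x y := fun h => hab (Quotient.sound h)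
    have hxy : x ≠ y := fun h => hnr (Or.inl h)
    by_cases hxI : x ∈ I
    · have hyI : y ∉ I := fun h => hnr (Or.inr ⟨hxI, h⟩)
      obtain ⟨U, V, hUo, hVo, hIU, hyV, hUV⟩ := hIc.separation_of_notMem hyI
      refine ⟨π '' U, π '' V, hopen U hUo (Or.inr hIU), hopen V hVo
        (Or.inl (Set.eq_empty_of_subset_empty fun z ⟨hz1, hz2⟩ =>
          hUV.le_bot ⟨hIU hz1, hz2⟩)), ⟨x, hIU hxI, rfl⟩, ⟨y, hyV, rfl⟩, ?_⟩
      rw [Set.disjoint_iff_inter_eq_empty]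
      ext c
      simp only [Set.mem_inter_iff, Set.mem_image, Set.mem_empty_iff_false, iff_false]
      rintro ⟨⟨u, hu, rfl⟩, v, hv, hvc⟩
      rcases Quotient.exact hvc with rfl | ⟨hvI, huI⟩
      · exact hUV.le_bot ⟨hu, hv⟩
      · exact hUV.le_bot ⟨hIU hvI, hv⟩ |>.elim
    · by_cases hyI : y ∈ I
      · obtain ⟨U, V, hUo, hVo, hIU, hxV, hUV⟩ := hIc.separation_of_notMem hxI
        refine ⟨π '' V, π '' U, hopen V hVo
          (Or.inl (Set.eq_empty_of_subset_empty fun z ⟨hz1, hz2⟩ =>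
            hUV.le_bot ⟨hIU hz1, hz2⟩)), hopen U hUo (Or.inr hIU),
          ⟨x, hxV, rfl⟩, ⟨y, hIU hyI, rfl⟩, ?_⟩
        rw [Set.disjoint_iff_inter_eq_empty]
        ext c
        simp only [Set.mem_inter_iff, Set.mem_image, Set.mem_empty_iff_false, iff_false]
        rintro ⟨⟨v, hv, rfl⟩, u, hu, huc⟩
        rcases Quotient.exact huc with rfl | ⟨huI, hvI⟩
        · exact hUV.le_bot ⟨hu, hv⟩
        · exact hUV.le_bot ⟨hIU hvI, hv⟩ |>.elim
      · -- both outside I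
        obtain ⟨U, V, hUo, hVo, hxU, hyV, hUV⟩ := t2_separation hxy
        set U' := U \ I with hU'
        set V' := V \ I with hV'
        have hU'o : IsOpen U' := hUo.sdiff hIcl
        have hV'o : IsOpen V' := hVo.sdiff hIcl
        refine ⟨π '' U', π '' V',
          hopen U' hU'o (Or.inl (by ext z; simp [hU'])),
          hopen V' hV'o (Or.inl (by ext z; simp [hV'])),
          ⟨x, ⟨hxU, hxI⟩, rfl⟩, ⟨y, ⟨hyV, hyI⟩, rfl⟩, ?_⟩
        rw [Set.disjoint_iff_inter_eq_empty]
        ext c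
        simp only [Set.mem_inter_iff, Set.mem_image, Set.mem_empty_iff_false, iff_false]
        rintro ⟨⟨u, hu, rfl⟩, v, hv, hvc⟩
        rcases Quotient.exact hvc with rfl | ⟨hvI, huI⟩
        · exact hUV.le_bot ⟨hu.1, hv.1⟩
        · exact hv.2 hvI
  · -- left translations continuous
    intro a
    induction a using Quotient.inductionOn with | h s =>
    letI : Setoid S := reesSetoid I
    rw [isQuotientMap_quotient_mk'.continuous_iff]
    have : (fun x : ReesQuotient I => m (π s) x) ∘ (Quotient.mk' : S → ReesQuotient I)
        = fun t : S => π (s * t) := by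
      funext t
      simpa [Quotient.mk'] using hm s t
    rw [this]
    exact continuous_quotient_mk'.comp (hl s)
  · -- right translations continuous
    intro a
    induction a using Quotient.inductionOn with | h s =>
    letI : Setoid S := reesSetoid I
    rw [isQuotientMap_quotient_mk'.continuous_iff]
    have : (fun x : ReesQuotient I => m x (π s)) ∘ (Quotient.mk' : S → ReesQuotient I)
        = fun t : S => π (t * s) := by
      funext t
      simpa [Quotient.mk'] using hm t s
    rw [this]
    exact continuous_quotient_mk'.comp (hr s)
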